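/- Consider the two-wave Hamiltonian H(q, p, t) = ½p² − μ·cos(2πq) − μν·cos(2πk(q − t)) with parameters μ, ν ∈ ℝ and k a positive integer, and the first-order approximate invariant J(q, p, t) = −½p² + ⅓p³ − μ·((p − 1)·cos(2πq) + ν·p·cos(2πk(q − t))). Let G(q, t) = cos(2πq) + ν·cos(2πk(q − t)). Then along every C¹ solution (q(t), p(t)) of Hamilton's equations q̇ = ∂H/∂p, ṗ = −∂H/∂q, the derivative of J along the flow satisfies d/dt [J(q(t), p(t), t)] = −μ²·G(q(t), t)·∂G/∂q(q(t), t) = −(μ²/2)·∂/∂q[G²](q(t), t). In particular, all terms of order μ cancel identically and J is an adiabatic invariant correct to first order in μ. -/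

import Mathlib

/-- The two-wave Hamiltonian `H(q, p, t) = ½p² − μ cos(2πq) − μν cos(2πk(q − t))`. -/
noncomputable def twoWaveH (μ ν : ℝ) (k : ℕ) (q p t : ℝ) : ℝ :=
  p ^ 2 / 2 - μ * Real.cos (2 * Real.pi * q) - μ * ν * Real.cos (2 * Real.pi * k * (q - t))

/-- The first-order approximate invariant
`J(q, p, t) = −½p² + ⅓p³ − μ ((p − 1) cos(2πq) + ν p cos(2πk(q − t)))`. -/
noncomputable def twoWaveJ (μ ν : ℝ) (k : ℕ) (q p t : ℝ) : ℝ :=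
  -(p ^ 2) / 2 + p ^ 3 / 3
    - μ * ((p - 1) * Real.cos (2 * Real.pi * q) + ν * p * Real.cos (2 * Real.pi * k * (q - t)))

/-- `G(q, t) = cos(2πq) + ν cos(2πk(q − t))`. -/
noncomputable def twoWaveG (ν : ℝ) (k : ℕ) (q t : ℝ) : ℝ :=
  Real.cos (2 * Real.pi * q) + ν * Real.cos (2 * Real.pi * k * (q - t))

/-!
Since `H = ½p² − μG`, Hamilton's equations read `q̇ = p`, `ṗ = μ ∂G/∂q`, and
`J = −½p² + ⅓p³ − μ(pG − cos 2πq)`. Differentiating along the flow, the order-`μ` terms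
collect into `μp (∂_q cos 2πq − ∂_q G − ∂_t G)`, which vanishes because the second wave
depends on `q − t` only; what remains is `−μ² G ∂G/∂q`.
-/

open Real

section TwoWave

variable (μ ν : ℝ) (k : ℕ)

noncomputable def twoWaveGq (q t : ℝ) : ℝ :=
  -(2 * π * sin (2 * π * q)) - 2 * π * k * ν * sin (2 * π * k * (q - t))

theorem twoWaveH_eq_twoWaveG (q p t : ℝ) :
    twoWaveH μ ν k q p t = p ^ 2 / 2 - μ * twoWaveG ν k q t := by
  unfold twoWaveH twoWaveG
  ring

theorem twoWaveJ_eq_twoWaveG (q p t : ℝ) :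
    twoWaveJ μ ν k q p t =
      -(p ^ 2) / 2 + p ^ 3 / 3 - μ * (p * twoWaveG ν k q t - cos (2 * π * q)) := by
  unfold twoWaveJ twoWaveG
  ring

variable {μ ν k}

theorem hasDerivAt_cos_two_pi_comp {f : ℝ → ℝ} {f' x : ℝ} (hf : HasDerivAt f f' x) :
    HasDerivAt (fun s => cos (2 * π * f s)) (-(2 * π * sin (2 * π * f x)) * f') x := by
  convert (hf.const_mul (2 * π)).cos using 1
  ring

theorem hasDerivAt_twoWaveG_comp {f g : ℝ → ℝ} {f' g' x : ℝ} (hf : HasDerivAt f f' x)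
    (hg : HasDerivAt g g' x) :
    HasDerivAt (fun s => twoWaveG ν k (f s) (g s))
      (twoWaveGq ν k (f x) (g x) * f' + 2 * π * k * ν * sin (2 * π * k * (f x - g x)) * g') x := by
  have hwave := ((hf.fun_sub hg).const_mul (2 * π * k)).cos.const_mul ν
  exact ((hasDerivAt_cos_two_pi_comp hf).add hwave).congr_deriv (by unfold twoWaveGq; ring)

theorem hasDerivAt_twoWaveG (q t : ℝ) :
    HasDerivAt (fun q => twoWaveG ν k q t) (twoWaveGq ν k q t) q := by
  simpa using hasDerivAt_twoWaveG_comp (ν := ν) (k := k) (hasDerivAt_id q) (hasDerivAt_const q t)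

theorem deriv_twoWaveH_p (q p t : ℝ) : deriv (fun p => twoWaveH μ ν k q p t) p = p := by
  simp only [twoWaveH_eq_twoWaveG]
  simp

theorem deriv_twoWaveH_q (q p t : ℝ) :
    deriv (fun q => twoWaveH μ ν k q p t) q = -(μ * twoWaveGq ν k q t) := by
  simp only [twoWaveH_eq_twoWaveG]
  exact (((hasDerivAt_twoWaveG q t).const_mul μ).const_sub _).deriv

end TwoWave

theorem stmt17_general (μ ν : ℝ) (k : ℕ) (Q P : ℝ → ℝ)
    (hQ : ∀ t, HasDerivAt Q (deriv (fun p => twoWaveH μ ν k (Q t) p t) (P t)) t)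
    (hP : ∀ t, HasDerivAt P (-(deriv (fun q => twoWaveH μ ν k q (P t) t) (Q t))) t)
    (t : ℝ) :
    HasDerivAt (fun s => twoWaveJ μ ν k (Q s) (P s) s)
      (-μ ^ 2 * twoWaveG ν k (Q t) t * deriv (fun q => twoWaveG ν k q t) (Q t)) t ∧
    -μ ^ 2 * twoWaveG ν k (Q t) t * deriv (fun q => twoWaveG ν k q t) (Q t)
      = -(μ ^ 2 / 2) * deriv (fun q => (twoWaveG ν k q t) ^ 2) (Q t) := by
  have hQ' : HasDerivAt Q (P t) t := by simpa only [deriv_twoWaveH_p] using hQ t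
  have hP' : HasDerivAt P (μ * twoWaveGq ν k (Q t) t) t := by
    simpa only [deriv_twoWaveH_q, neg_neg] using hP t
  have hG := hasDerivAt_twoWaveG (ν := ν) (k := k) (Q t) t
  have hGflow := hasDerivAt_twoWaveG_comp (ν := ν) (k := k) hQ' (hasDerivAt_id t)
  have hJ := ((hP'.fun_pow 2).fun_neg.div_const 2).fun_add ((hP'.fun_pow 3).div_const 3) |>.fun_sub
    (((hP'.fun_mul hGflow).fun_sub (hasDerivAt_cos_two_pi_comp hQ')).const_mul μ)
  rw [hG.deriv, (hG.fun_pow 2).deriv]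
  refine ⟨?_, by ring⟩
  simp only [twoWaveJ_eq_twoWaveG]
  exact hJ.congr_deriv (by simp only [twoWaveGq, id]; ring)

/-- Along every `C¹` solution `(Q(t), P(t))` of Hamilton's equations
`q̇ = ∂H/∂p`, `ṗ = −∂H/∂q` for the two-wave Hamiltonian, the derivative of the first-order
approximate invariant `J` along the flow satisfies
`d/dt J(Q(t), P(t), t) = −μ² G(Q(t), t) ∂G/∂q(Q(t), t) = −(μ²/2) ∂/∂q[G²](Q(t), t)`;
in particular all terms of order `μ` cancel and `J` is an adiabatic invariant correct to
first order in `μ`. -/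
theorem stmt17 (μ ν : ℝ) (k : ℕ) (hk : 0 < k) (Q P : ℝ → ℝ)
    (hQ : ∀ t, HasDerivAt Q (deriv (fun p => twoWaveH μ ν k (Q t) p t) (P t)) t)
    (hP : ∀ t, HasDerivAt P (-(deriv (fun q => twoWaveH μ ν k q (P t) t) (Q t))) t)
    (t : ℝ) :
    HasDerivAt (fun s => twoWaveJ μ ν k (Q s) (P s) s)
      (-μ ^ 2 * twoWaveG ν k (Q t) t * deriv (fun q => twoWaveG ν k q t) (Q t)) t ∧
    -μ ^ 2 * twoWaveG ν k (Q t) t * deriv (fun q => twoWaveG ν k q t) (Q t)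
      = -(μ ^ 2 / 2) * deriv (fun q => (twoWaveG ν k q t) ^ 2) (Q t) :=
  stmt17_general μ ν k Q P hQ hP t
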